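/- arXiv:2410.01235 — 2 statements merged into one kernel-verified Lean document; each statement's English description precedes it below -/
import Mathlib

section
/- If A ∈ ℝ^{m×k} and B ∈ ℝ^{ℓ×k} are matrices and A has full column rank k, and every column of B is nonzero, then the Khatri-Rao product A ⊙ B ∈ ℝ^{mℓ×k} has full column rank k. -/
open Matrix

/-- The Khatri-Rao product: the column-wise Kronecker product, with entries
`(A ⊙ B)_{(i,i'),j} = A_{i,j} B_{i',j}`. -/
def khatriRao {n ℓ k : ℕ} (A : Matrix (Fin n) (Fin k) ℝ) (B : Matrix (Fin ℓ) (Fin k) ℝ) :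
    Matrix (Fin n × Fin ℓ) (Fin k) ℝ :=
  Matrix.of fun p j => A p.1 j * B p.2 j

lemma rank_eq_card_iff_ker {I : Type*} [Fintype I] {k : ℕ} (A : Matrix I (Fin k) ℝ) :
    A.rank = k ↔ LinearMap.ker A.mulVecLin = ⊥ := by
  have hrn := LinearMap.finrank_range_add_finrank_ker A.mulVecLin
  rw [show (Module.finrank ℝ (Fin k → ℝ)) = k by simp] at hrn
  rw [Matrix.rank]
  constructor
  · intro h
    rw [← Submodule.finrank_eq_zero]
    omega
  · intro h
    rw [← Submodule.finrank_eq_zero] at h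
    omega

/-- If `A` has full column rank `k` and every column of `B` is nonzero, then
the Khatri-Rao product `A ⊙ B` has full column rank `k`. -/
theorem khatriRao_full_column_rank {m ℓ k : ℕ}
    (A : Matrix (Fin m) (Fin k) ℝ) (B : Matrix (Fin ℓ) (Fin k) ℝ)
    (hA : A.rank = k) (hB : ∀ j : Fin k, (fun i => B i j) ≠ 0) :
    (khatriRao A B).rank = k := by
  rw [rank_eq_card_iff_ker] at hA ⊢
  rw [LinearMap.ker_eq_bot'] at hA ⊢
  intro x hx
  -- hx : (khatriRao A B).mulVec x = 0
  have key : ∀ (i' : Fin ℓ) (j : Fin k), B i' j * x j = 0 := by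
    intro i'
    have h1 : A.mulVec (fun j => B i' j * x j) = 0 := by
      funext i
      have := congrFun hx (i, i')
      simpa [khatriRao, Matrix.mulVec, dotProduct, mul_assoc, mul_comm, mul_left_comm]
        using this
    have := hA _ h1
    exact fun j => congrFun this j
  funext j
  obtain ⟨i', hi'⟩ : ∃ i', B i' j ≠ 0 := by
    by_contra h
    push_neg at h
    exact hB j (funext h)
  have := key i' j
  simpa [hi'] using mul_eq_zero.mp this |>.resolve_left hi'
end

section
/- Let Λ be a d×K matrix with columns in the probability simplex, and suppose Λ has full column rank K. Then the map from Δ^{K-1} to Δ^{d-1} given by π ↦ Λπ is injective, and moreover if two probability distributions D, D' on Δ^{K-1} have the same pushforward under π ↦ Λπ composed with three conditionally independent draws (i.e., the same joint law of (y_1,y_2,y_3) where y_1,y_2,y_3 are conditionally independent given π with P(y_m = c | π) = (Λπ)_c), then all mixed moments E_D[π_k π_{k'} π_{k''}] and E_{D'}[π_k π_{k'} π_{k''}] up to order three coincide. -/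
open MeasureTheory Matrix

lemma my_integrable_prod {K : ℕ} (μ : Measure (Fin K → ℝ)) [IsProbabilityMeasure μ]
    (hμ : ∀ᵐ π ∂μ, π ∈ stdSimplex ℝ (Fin K)) {n : ℕ} (k : Fin n → Fin K) :
    Integrable (fun π => ∏ m, π (k m)) μ := by
  refine (integrable_const (1 : ℝ)).mono' ?_ ?_
  · exact (continuous_finset_prod _ fun m _ => continuous_apply (k m)).aestronglyMeasurable
  · filter_upwards [hμ] with π hπ
    have h0 : ∀ i, 0 ≤ π i := hπ.1
    have h1 : ∀ i, π i ≤ 1 := by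
      intro i
      calc π i ≤ ∑ j, π j := Finset.single_le_sum (fun j _ => h0 j) (Finset.mem_univ i)
        _ = 1 := hπ.2
    have : 0 ≤ ∏ m, π (k m) := Finset.prod_nonneg fun m _ => h0 _
    rw [Real.norm_eq_abs, abs_of_nonneg this]
    exact Finset.prod_le_one (fun m _ => h0 _) (fun m _ => h1 _)

lemma my_expand {K d : ℕ} (Λ : Matrix (Fin d) (Fin K) ℝ)
    (μ : Measure (Fin K → ℝ)) [IsProbabilityMeasure μ]
    (hμ : ∀ᵐ π ∂μ, π ∈ stdSimplex ℝ (Fin K)) (c : Fin 3 → Fin d) :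
    ∫ π, ∏ m, Λ.mulVec π (c m) ∂μ
      = ∑ k : Fin 3 → Fin K, (∏ m, Λ (c m) (k m)) * ∫ π, ∏ m, π (k m) ∂μ := by
  have hpt : ∀ π : Fin K → ℝ,
      (∏ m, Λ.mulVec π (c m))
        = ∑ k : Fin 3 → Fin K, (∏ m, Λ (c m) (k m)) * ∏ m, π (k m) := by
    intro π
    have : (∏ m, Λ.mulVec π (c m)) = ∏ m, ∑ j, Λ (c m) j * π j := by
      simp [Matrix.mulVec, dotProduct]
    rw [this, Fintype.prod_sum]
    exact Finset.sum_congr rfl fun k _ => Finset.prod_mul_distrib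
  calc ∫ π, ∏ m, Λ.mulVec π (c m) ∂μ
      = ∫ π, ∑ k : Fin 3 → Fin K, (∏ m, Λ (c m) (k m)) * ∏ m, π (k m) ∂μ := by
        exact integral_congr_ae (Filter.Eventually.of_forall fun π => hpt π)
    _ = ∑ k : Fin 3 → Fin K, ∫ π, (∏ m, Λ (c m) (k m)) * ∏ m, π (k m) ∂μ := by
        exact integral_finset_sum _ fun k _ => (my_integrable_prod μ hμ k).const_mul _
    _ = ∑ k : Fin 3 → Fin K, (∏ m, Λ (c m) (k m)) * ∫ π, ∏ m, π (k m) ∂μ := by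
        simp [integral_const_mul]

/-- If the `d × K` column-stochastic matrix `Λ` has full column rank `K`, then
`π ↦ Λπ` is injective on the simplex; moreover, if two mixing distributions `D, D'`
on `Δ^{K-1}` induce the same joint law of three conditionally independent draws
`(y₁, y₂, y₃)` with `P(y_m = c | π) = (Λπ)_c`, then all mixed moments of `π` up to
order three coincide under `D` and `D'`. -/
theorem full_rank_injective_and_moment_matching {K d : ℕ}
    (Λ : Matrix (Fin d) (Fin K) ℝ)
    (hΛ : ∀ k, (fun c => Λ c k) ∈ stdSimplex ℝ (Fin d))
    (hrank : Λ.rank = K)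
    (D D' : Measure (Fin K → ℝ))
    [IsProbabilityMeasure D] [IsProbabilityMeasure D']
    (hD : ∀ᵐ π ∂D, π ∈ stdSimplex ℝ (Fin K))
    (hD' : ∀ᵐ π ∂D', π ∈ stdSimplex ℝ (Fin K))
    (hjoint : ∀ c : Fin 3 → Fin d,
      ∫ π, ∏ m, Λ.mulVec π (c m) ∂D = ∫ π, ∏ m, Λ.mulVec π (c m) ∂D') :
    Set.InjOn Λ.mulVec (stdSimplex ℝ (Fin K)) ∧
    (∀ k : Fin K, ∫ π, π k ∂D = ∫ π, π k ∂D') ∧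
    (∀ k k' : Fin K, ∫ π, π k * π k' ∂D = ∫ π, π k * π k' ∂D') ∧
    (∀ k k' k'' : Fin K,
      ∫ π, π k * π k' * π k'' ∂D = ∫ π, π k * π k' * π k'' ∂D') := by
  -- kernel is trivial
  have hker : LinearMap.ker Λ.mulVecLin = ⊥ := by
    have hrn := Λ.mulVecLin.finrank_range_add_finrank_ker
    rw [show (Matrix.rank Λ) = Module.finrank ℝ (LinearMap.range Λ.mulVecLin) from rfl] at hrank
    rw [hrank] at hrn
    simp only [Module.finrank_pi, Fintype.card_fin] at hrn
    have : Module.finrank ℝ (LinearMap.ker Λ.mulVecLin) = 0 := by omega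
    exact Submodule.finrank_eq_zero.mp this
  have hinj : Function.Injective Λ.mulVecLin := LinearMap.ker_eq_bot.mp hker
  -- left inverse matrix
  obtain ⟨g, hg⟩ := Λ.mulVecLin.exists_leftInverse_of_injective hker
  set B : Matrix (Fin K) (Fin d) ℝ := LinearMap.toMatrix' g with hB
  have hBΛ : B * Λ = 1 := by
    have h1 : LinearMap.toMatrix' (g.comp Λ.mulVecLin) = LinearMap.toMatrix' (LinearMap.id : (Fin K → ℝ) →ₗ[ℝ] Fin K → ℝ) := by rw [hg]
    rw [LinearMap.toMatrix'_comp, LinearMap.toMatrix'_id] at h1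
    rw [hB, ← h1]
    congr 1
    rw [← Matrix.toLin'_apply' Λ, LinearMap.toMatrix'_toLin']
  -- third moment tensors agree
  have hM : ∀ k : Fin 3 → Fin K,
      ∫ π, ∏ m, π (k m) ∂D = ∫ π, ∏ m, π (k m) ∂D' := by
    set gd : (Fin 3 → Fin K) → ℝ :=
      fun k => (∫ π, ∏ m, π (k m) ∂D) - ∫ π, ∏ m, π (k m) ∂D' with hgd
    have h0 : ∀ c : Fin 3 → Fin d,
        ∑ k : Fin 3 → Fin K, (∏ m, Λ (c m) (k m)) * gd k = 0 := by
      intro c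
      have := hjoint c
      rw [my_expand Λ D hD c, my_expand Λ D' hD' c] at this
      simp only [hgd, mul_sub]
      rw [Finset.sum_sub_distrib, this, sub_self]
    have hzero : ∀ j : Fin 3 → Fin K, gd j = 0 := by
      intro j
      have key : gd j = ∑ k : Fin 3 → Fin K, (∏ m, (B * Λ) (j m) (k m)) * gd k := by
        rw [hBΛ]
        have : ∀ k : Fin 3 → Fin K,
            (∏ m, (1 : Matrix (Fin K) (Fin K) ℝ) (j m) (k m)) = if j = k then 1 else 0 := by
          intro k
          simp only [Matrix.one_apply]
          rw [Fintype.prod_boole]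
          simp [funext_iff]
        simp only [this]
        simp [Finset.sum_ite_eq]
      rw [key]
      have hexp : ∀ k : Fin 3 → Fin K,
          (∏ m, (B * Λ) (j m) (k m))
            = ∑ c : Fin 3 → Fin d, (∏ m, B (j m) (c m)) * ∏ m, Λ (c m) (k m) := by
        intro k
        have h1 : (∏ m, (B * Λ) (j m) (k m)) = ∏ m, ∑ i, B (j m) i * Λ i (k m) := by
          simp [Matrix.mul_apply]
        rw [h1, Fintype.prod_sum]
        exact Finset.sum_congr rfl fun c _ => Finset.prod_mul_distrib
      calc ∑ k : Fin 3 → Fin K, (∏ m, (B * Λ) (j m) (k m)) * gd k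
          = ∑ k : Fin 3 → Fin K, ∑ c : Fin 3 → Fin d,
              (∏ m, B (j m) (c m)) * ((∏ m, Λ (c m) (k m)) * gd k) := by
            refine Finset.sum_congr rfl fun k _ => ?_
            rw [hexp k, Finset.sum_mul]
            exact Finset.sum_congr rfl fun c _ => mul_assoc _ _ _
        _ = ∑ c : Fin 3 → Fin d, (∏ m, B (j m) (c m)) *
              ∑ k : Fin 3 → Fin K, (∏ m, Λ (c m) (k m)) * gd k := by
            rw [Finset.sum_comm]
            exact Finset.sum_congr rfl fun c _ => (Finset.mul_sum _ _ _).symm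
        _ = 0 := by simp [h0]
    intro k
    have := hzero k
    simp only [hgd] at this
    linarith
  -- third moments in the stated form
  have h3 : ∀ k k' k'' : Fin K,
      ∫ π, π k * π k' * π k'' ∂D = ∫ π, π k * π k' * π k'' ∂D' := by
    intro k k' k''
    have := hM ![k, k', k'']
    simpa [Fin.prod_univ_three, mul_assoc] using this
  have hsum3 : ∀ (μ : Measure (Fin K → ℝ)) [IsProbabilityMeasure μ],
      (∀ᵐ π ∂μ, π ∈ stdSimplex ℝ (Fin K)) → ∀ k k' : Fin K,
      ∫ π, π k * π k' ∂μ = ∑ k'' : Fin K, ∫ π, π k * π k' * π k'' ∂μ := by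
    intro μ _ hμ k k'
    have hint : ∀ k'' : Fin K, Integrable (fun π => π k * π k' * π k'') μ := by
      intro k''
      have := my_integrable_prod μ hμ ![k, k', k'']
      simpa [Fin.prod_univ_three, mul_assoc] using this
    rw [← integral_finset_sum _ fun k'' _ => hint k'']
    refine integral_congr_ae ?_
    filter_upwards [hμ] with π hπ
    rw [← Finset.mul_sum, hπ.2, mul_one]
  have hsum2 : ∀ (μ : Measure (Fin K → ℝ)) [IsProbabilityMeasure μ],
      (∀ᵐ π ∂μ, π ∈ stdSimplex ℝ (Fin K)) → ∀ k : Fin K,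
      ∫ π, π k ∂μ = ∑ k' : Fin K, ∫ π, π k * π k' ∂μ := by
    intro μ _ hμ k
    have hint : ∀ k' : Fin K, Integrable (fun π => π k * π k') μ := by
      intro k'
      have := my_integrable_prod μ hμ ![k, k']
      simpa [Fin.prod_univ_two] using this
    rw [← integral_finset_sum _ fun k' _ => hint k']
    refine integral_congr_ae ?_
    filter_upwards [hμ] with π hπ
    rw [← Finset.mul_sum, hπ.2, mul_one]
  have h2 : ∀ k k' : Fin K, ∫ π, π k * π k' ∂D = ∫ π, π k * π k' ∂D' := by
    intro k k'
    rw [hsum3 D hD k k', hsum3 D' hD' k k']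
    exact Finset.sum_congr rfl fun k'' _ => h3 k k' k''
  have h1 : ∀ k : Fin K, ∫ π, π k ∂D = ∫ π, π k ∂D' := by
    intro k
    rw [hsum2 D hD k, hsum2 D' hD' k]
    exact Finset.sum_congr rfl fun k' _ => h2 k k'
  refine ⟨?_, h1, h2, h3⟩
  intro x _ y _ hxy
  exact hinj hxy
end
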